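/- Let F be holomorphic on Δ⁺ with a continuous extension to Δ⁺ ∪ γ, suppose there exists C > 0 such that |Im F(t)| ≤ C·|Re F(t)| for every t ∈ γ, and suppose F vanishes to infinite order at 0. Assume further that there exist a constant K > 0, an open simply connected set B̂ ⊆ Δ⁺ with 0 ∈ ∂B̂, an exponent α > 0, and a map Ψ from the closure of Δ⁺ onto the closure of B̂ that is a homeomorphism, is Hölder continuous of exponent α, restricts to a biholomorphism from Δ⁺ onto B̂, and satisfies Ψ(0) = 0, such that |Im F(p)| ≤ K·|Re F(p)| for all p ∈ B̂. Then F is identically zero on Δ⁺. -/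

import Mathlib

/-- The open upper half disc `Δ⁺ = {ζ ∈ ℂ : |ζ| < 1, Im ζ > 0}`. -/
def upperHalfDisc : Set ℂ := {z : ℂ | ‖z‖ < 1 ∧ 0 < z.im}

/-- The interval `γ = (-1,1)` viewed as a subset of the real axis in `ℂ`. -/
def realSegment : Set ℂ := {z : ℂ | z.im = 0 ∧ -1 < z.re ∧ z.re < 1}

/-!
With `G = F ∘ Ψ`, Hölder continuity of `Ψ` at `0` and the infinite-order vanishing of `F` give
`G = O(z²)` at `0`, while `G` takes values in the cone `|Im w| ≤ K |Re w|`. A cone is not a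
neighbourhood of `0`, so by the open mapping theorem a zero of `G` forces `G ≡ 0`. Otherwise `Re G`
has constant sign, say positive; then `exp (-1 / G)` is bounded and decays like `exp (-b / ‖z‖²)`
at `0`, which Phragmén–Lindelöf on a half-plane (transported by `ζ ↦ I / (ζ + R)`) forbids for a
zero-free function. Hence `F ≡ 0` on `B̂ = Ψ(Δ⁺)`, and on `Δ⁺` by the identity theorem.
-/

open Set Filter Topology Asymptotics Complex

def realAxisCone (K : ℝ) : Set ℂ := {w : ℂ | |w.im| ≤ K * |w.re|}

section RealAxisCone

variable {K : ℝ} {w : ℂ}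

lemma norm_le_of_mem_realAxisCone (hw : w ∈ realAxisCone K) :
    ‖w‖ ≤ √(1 + K ^ 2) * |w.re| := by
  have him : w.im ^ 2 ≤ K ^ 2 * w.re ^ 2 := by
    simpa only [sq_abs, mul_pow] using pow_le_pow_left₀ (abs_nonneg w.im) hw 2
  rw [← Real.sqrt_sq (abs_nonneg w.re), ← Real.sqrt_mul (by positivity), sq_abs,
    Complex.norm_eq_sqrt_sq_add_sq]
  exact Real.sqrt_le_sqrt (by linarith)

lemma eq_zero_of_mem_realAxisCone_of_re_eq_zero (hw : w ∈ realAxisCone K) (hre : w.re = 0) :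
    w = 0 :=
  norm_le_zero_iff.1 (by simpa [hre] using norm_le_of_mem_realAxisCone hw)

lemma neg_mem_realAxisCone (hw : w ∈ realAxisCone K) : -w ∈ realAxisCone K := by
  simpa [realAxisCone] using hw

lemma realAxisCone_notMem_nhds_zero (K : ℝ) : realAxisCone K ∉ 𝓝 0 := by
  intro h
  obtain ⟨ε, hε, hball⟩ := Metric.mem_nhds_iff.1 h
  have hmem : ((ε / 2 : ℝ) : ℂ) * I ∈ realAxisCone K :=
    hball (by simp [abs_of_pos hε]; linarith)
  simp [realAxisCone] at hmem
  linarith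

end RealAxisCone

section ExpNegInv

variable {w : ℂ}

lemma norm_exp_neg_inv_le_one (hw : 0 ≤ w.re) : ‖exp (-w⁻¹)‖ ≤ 1 := by
  rw [norm_exp, neg_re, Real.exp_le_one_iff, neg_nonpos, inv_re]
  exact div_nonneg hw (normSq_nonneg w)

lemma norm_exp_neg_inv_le {M : ℝ} (hw : 0 < w.re) (hM : ‖w‖ ≤ M * w.re) :
    ‖exp (-w⁻¹)‖ ≤ Real.exp (-(M * ‖w‖)⁻¹) := by
  have hw0 : 0 < ‖w‖ := norm_pos_iff.2 (ne_zero_of_re_pos hw)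
  have hM0 : 0 < M := pos_of_mul_pos_left (hw0.trans_le hM) hw.le
  rw [norm_exp, neg_re, Real.exp_le_exp, neg_le_neg_iff, inv_re, normSq_eq_norm_sq,
    le_div_iff₀ (by positivity)]
  calc (M * ‖w‖)⁻¹ * ‖w‖ ^ 2 = ‖w‖ / M := by field_simp
    _ ≤ w.re := by rwa [div_le_iff₀' hM0]

end ExpNegInv

lemma norm_I_div_le_inv_re {w : ℂ} (hw : 0 < w.re) : ‖I / w‖ ≤ w.re⁻¹ := by
  rw [norm_div, norm_I, one_div]
  exact inv_anti₀ hw (re_le_norm w)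

lemma isOpen_upperHalfDisc : IsOpen upperHalfDisc :=
  (isOpen_lt continuous_norm continuous_const).inter (isOpen_lt continuous_const continuous_im)

lemma isPreconnected_upperHalfDisc : IsPreconnected upperHalfDisc := by
  have h : upperHalfDisc = Metric.ball 0 1 ∩ {z : ℂ | 0 < z.im} := by
    ext z; simp [upperHalfDisc]
  exact (h ▸ (convex_ball 0 1).inter (convex_halfSpace_im_gt 0)).isPreconnected

lemma I_div_mem_upperHalfDisc {w : ℂ} (hw : 1 < w.re) : I / w ∈ upperHalfDisc := by
  refine ⟨(norm_I_div_le_inv_re (by linarith)).trans_lt (inv_lt_one_of_one_lt₀ hw), ?_⟩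
  rw [div_im, I_re, I_im]
  have := normSq_pos.2 (ne_zero_of_one_lt_re hw)
  simp only [one_mul, zero_mul, zero_div, sub_zero]
  positivity

lemma zero_mem_closure_upperHalfDisc : (0 : ℂ) ∈ closure upperHalfDisc := by
  refine mem_closure_of_tendsto (f := fun t : ℝ => (t : ℂ) * I) (b := 𝓝[>] 0) ?_ ?_
  · exact ((by fun_prop : Continuous fun t : ℝ => (t : ℂ) * I).tendsto' 0 0 (by simp)).mono_left
      nhdsWithin_le_nhds
  · filter_upwards [Ioo_mem_nhdsGT zero_lt_one] with t ht
    exact ⟨by simpa [abs_of_pos ht.1] using ht.2, by simpa using ht.1⟩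

lemma superpolynomialDecay_exp_of_abs_le_exp_neg_sq {g : ℝ → ℝ} {b : ℝ} (hb : 0 < b)
    (hg : ∀ᶠ x in atTop, |g x| ≤ Real.exp (-b * x ^ 2)) :
    SuperpolynomialDecay atTop Real.exp g := by
  have hgauss : SuperpolynomialDecay atTop Real.exp fun x => Real.exp (-b * x ^ 2) := by
    intro n
    simp_rw [← Real.exp_nat_mul, ← Real.exp_add, Real.tendsto_exp_comp_nhds_zero]
    have hlin : Tendsto (fun x : ℝ => n - b * x) atTop atBot :=
      tendsto_atBot_add_const_left _ _ (tendsto_neg_atTop_atBot.comp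
        (tendsto_id.const_mul_atTop hb))
    refine (tendsto_id.atTop_mul_atBot₀ hlin).congr fun x => ?_
    simp only [id]; ring
  exact hgauss.trans_eventually_abs_le (hg.mono fun x hx => by
    simpa [abs_of_pos (Real.exp_pos _)] using hx)

lemma eqOn_zero_right_half_plane_of_bounded_of_gaussian_decay {f : ℂ → ℂ} {C b : ℝ}
    (hd : DiffContOnCl ℂ f {z | 0 < z.re}) (hb : 0 < b) (hC : ∀ z : ℂ, 0 ≤ z.re → ‖f z‖ ≤ C)
    (hdecay : ∀ x : ℝ, 0 ≤ x → ‖f x‖ ≤ Real.exp (-b * x ^ 2)) :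
    EqOn f 0 {z | 0 ≤ z.re} := by
  refine PhragmenLindelof.eq_zero_on_right_half_plane_of_superexponential_decay hd
    ⟨0, two_pos, 0, IsBigO.of_bound C ?_⟩ ?_ ⟨C, fun x => hC _ (by simp)⟩
  · filter_upwards [mem_inf_of_right (mem_principal_self _)] with z hz
    simpa using hC z (le_of_lt hz)
  · refine superpolynomialDecay_exp_of_abs_le_exp_neg_sq hb ?_
    filter_upwards [eventually_ge_atTop 0] with x hx
    simpa using hdecay x hx

lemma exists_eq_zero_of_bounded_of_decay_upperHalfDisc {H : ℂ → ℂ} {C b : ℝ}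
    (hH : DifferentiableOn ℂ H upperHalfDisc) (hb : 0 < b)
    (hC : ∀ z ∈ upperHalfDisc, ‖H z‖ ≤ C)
    (hdecay : ∀ᶠ z in 𝓝[upperHalfDisc] 0, ‖H z‖ ≤ Real.exp (-b / ‖z‖ ^ 2)) :
    ∃ z ∈ upperHalfDisc, H z = 0 := by
  obtain ⟨ρ, hρ, hρdecay⟩ := Metric.eventually_nhds_iff.1 (eventually_nhdsWithin_iff.1 hdecay)
  -- `ζ ↦ I / (ζ + R)` maps the closed right half-plane into `Δ⁺ ∩ ball 0 ρ` and `x ≥ 0` to a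
  -- point of norm `1 / (x + R)`, turning the decay of `H` into Gaussian decay along `ℝ≥0`.
  set R : ℝ := 1 + ρ⁻¹
  have hre : ∀ ζ : ℂ, 0 ≤ ζ.re → 1 < (ζ + R).re := fun ζ hζ => by
    simp only [add_re, ofReal_re, R]; linarith [inv_pos.2 hρ]
  have hmem : ∀ ζ : ℂ, 0 ≤ ζ.re → I / (ζ + R) ∈ upperHalfDisc := fun ζ hζ =>
    I_div_mem_upperHalfDisc (hre ζ hζ)
  have hdiff : ∀ ζ : ℂ, 0 ≤ ζ.re → DifferentiableAt ℂ (fun ζ => H (I / (ζ + R))) ζ :=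
    fun ζ hζ => (hH.differentiableAt (isOpen_upperHalfDisc.mem_nhds (hmem ζ hζ))).comp ζ
      ((differentiableAt_const I).div (differentiableAt_id.add_const _)
        (ne_zero_of_one_lt_re (hre ζ hζ)))
  have hd : DiffContOnCl ℂ (fun ζ => H (I / (ζ + R))) {z | 0 < z.re} :=
    ⟨fun ζ hζ => (hdiff ζ (le_of_lt hζ)).differentiableWithinAt, by
      rw [closure_setOfPred_lt_re]
      exact fun ζ hζ => (hdiff ζ hζ).continuousAt.continuousWithinAt⟩
  have hgauss : ∀ x : ℝ, 0 ≤ x → ‖H (I / (x + R))‖ ≤ Real.exp (-b * x ^ 2) := by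
    intro x hx
    have hxR : 0 < x + R := by positivity
    have hnorm : ‖I / (x + R)‖ = (x + R)⁻¹ := by
      rw [norm_div, norm_I, ← ofReal_add, norm_real, Real.norm_of_nonneg hxR.le, one_div]
    have hsmall : (x + R)⁻¹ < ρ := inv_lt_of_inv_lt₀ hρ (by simp only [R]; linarith)
    calc ‖H (I / (x + R))‖ ≤ Real.exp (-b / ‖I / (x + R)‖ ^ 2) :=
          hρdecay (by rwa [dist_zero_right, hnorm]) (hmem _ (by simpa using hx))
      _ = Real.exp (-b * (x + R) ^ 2) := by rw [hnorm, inv_pow, div_inv_eq_mul]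
      _ ≤ Real.exp (-b * x ^ 2) := by
          have hR : 0 < R := by positivity
          have : x ^ 2 ≤ (x + R) ^ 2 := by nlinarith
          exact Real.exp_le_exp.2 (by nlinarith)
  have hzero := eqOn_zero_right_half_plane_of_bounded_of_gaussian_decay hd hb
    (fun ζ hζ => hC _ (hmem ζ hζ)) hgauss (show (0 : ℂ) ∈ {z : ℂ | 0 ≤ z.re} by simp)
  exact ⟨_, hmem 0 le_rfl, hzero⟩

lemma not_isBigO_sq_of_re_pos_of_mapsTo_realAxisCone {G : ℂ → ℂ} {K : ℝ}
    (hG : DifferentiableOn ℂ G upperHalfDisc)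
    (hpos : MapsTo (fun z => (G z).re) upperHalfDisc (Ioi 0))
    (hcone : MapsTo G upperHalfDisc (realAxisCone K)) :
    ¬ G =O[𝓝[upperHalfDisc] 0] fun z => z ^ 2 := by
  intro hO
  obtain ⟨A, hA, hAbound⟩ := hO.exists_pos
  set M := √(1 + K ^ 2)
  have hM : 0 < M := Real.sqrt_pos.2 (by positivity)
  have hne : ∀ z ∈ upperHalfDisc, G z ≠ 0 := fun z hz => ne_zero_of_re_pos (hpos hz)
  -- `Re (1 / G) ≥ 1 / (M ‖G‖) ≥ 1 / (M A ‖z‖²)` with `M = √(1 + K²)`.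
  have hdecay : ∀ᶠ z in 𝓝[upperHalfDisc] 0,
      ‖exp (-(G z)⁻¹)‖ ≤ Real.exp (-(M * A)⁻¹ / ‖z‖ ^ 2) := by
    filter_upwards [hAbound.bound, self_mem_nhdsWithin] with z hAz hz
    have hre : 0 < (G z).re := hpos hz
    have hGz : ‖G z‖ ≤ M * (G z).re := by
      simpa [abs_of_pos hre] using norm_le_of_mem_realAxisCone (hcone hz)
    have hGz0 : 0 < ‖G z‖ := norm_pos_iff.2 (hne z hz)
    rw [norm_pow] at hAz
    calc ‖exp (-(G z)⁻¹)‖ ≤ Real.exp (-(M * ‖G z‖)⁻¹) := norm_exp_neg_inv_le hre hGz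
      _ ≤ Real.exp (-(M * A)⁻¹ / ‖z‖ ^ 2) := by
          rw [neg_div, div_eq_mul_inv, ← mul_inv, Real.exp_le_exp, neg_le_neg_iff]
          exact inv_anti₀ (by positivity) (by nlinarith)
  obtain ⟨z, -, hz⟩ := exists_eq_zero_of_bounded_of_decay_upperHalfDisc (hG.inv hne).neg.cexp
    (by positivity) (fun z hz => norm_exp_neg_inv_le_one (hpos hz).le) hdecay
  exact exp_ne_zero _ hz

lemma AnalyticOnNhd.eqOn_const_of_mapsTo_of_notMem_nhds {E : Type*} [NormedAddCommGroup E]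
    [NormedSpace ℂ E] {G : E → ℂ} {U : Set E} {S : Set ℂ} {z₀ : E}
    (hG : AnalyticOnNhd ℂ G U) (hU : IsOpen U) (hUc : IsPreconnected U) (hz₀ : z₀ ∈ U)
    (hmaps : MapsTo G U S) (hS : S ∉ 𝓝 (G z₀)) : ∀ z ∈ U, G z = G z₀ := by
  rcases hG.is_constant_or_isOpen hUc with ⟨w, hw⟩ | hopen
  · exact fun z hz => (hw z hz).trans (hw z₀ hz₀).symm
  · exact absurd (mem_of_superset ((hopen U subset_rfl hU).mem_nhds (mem_image_of_mem G hz₀))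
      hmaps.image_subset) hS

theorem eqOn_zero_of_isBigO_sq_of_mapsTo_realAxisCone {G : ℂ → ℂ} {K : ℝ}
    (hG : DifferentiableOn ℂ G upperHalfDisc) (hcone : MapsTo G upperHalfDisc (realAxisCone K))
    (hO : G =O[𝓝[upperHalfDisc] 0] fun z => z ^ 2) : ∀ z ∈ upperHalfDisc, G z = 0 := by
  by_cases hzero : ∃ z₀ ∈ upperHalfDisc, G z₀ = 0
  · obtain ⟨z₀, hz₀, hGz₀⟩ := hzero
    simpa only [hGz₀] using
      (hG.analyticOnNhd isOpen_upperHalfDisc).eqOn_const_of_mapsTo_of_notMem_nhds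
        isOpen_upperHalfDisc isPreconnected_upperHalfDisc hz₀ hcone
        (hGz₀ ▸ realAxisCone_notMem_nhds_zero K)
  push Not at hzero
  have hre : ∀ z ∈ upperHalfDisc, (G z).re ≠ 0 := fun z hz h =>
    hzero z hz (eq_zero_of_mem_realAxisCone_of_re_eq_zero (hcone hz) h)
  rcases isPreconnected_upperHalfDisc.mapsTo_Ioi_or_Iio
    (continuous_re.comp_continuousOn hG.continuousOn) hre with hpos | hneg
  · exact (not_isBigO_sq_of_re_pos_of_mapsTo_realAxisCone hG hpos hcone hO).elim
  · refine (not_isBigO_sq_of_re_pos_of_mapsTo_realAxisCone hG.neg (fun z hz => ?_)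
      (fun z hz => neg_mem_realAxisCone (hcone hz)) hO.neg_left).elim
    simpa using hneg hz

lemma isBigO_comp_pow_of_forall_isBigO_pow {E : Type*} [NormedAddCommGroup E] {F : ℂ → E}
    {Ψ : ℂ → ℂ} {s : Set ℂ} {α : ℝ} (hα : 0 < α)
    (hF : ∀ k : ℕ, F =O[𝓝[s] 0] fun w => w ^ k) (hΨ : Ψ =O[𝓝[s] 0] fun z => ‖z‖ ^ α)
    (hmaps : MapsTo Ψ s s) (n : ℕ) : (fun z => F (Ψ z)) =O[𝓝[s] 0] fun z => z ^ n := by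
  obtain ⟨k, hk⟩ : ∃ k : ℕ, (n : ℝ) ≤ α * k :=
    ⟨⌈n / α⌉₊, by rw [← div_le_iff₀' hα]; exact Nat.le_ceil _⟩
  have hnorm_rpow : Tendsto (fun z : ℂ => ‖z‖ ^ α) (𝓝[s] 0) (𝓝 0) :=
    (((continuous_norm.rpow_const fun _ => Or.inr hα.le).tendsto' 0 0 (by
      simp [Real.zero_rpow hα.ne'])).mono_left nhdsWithin_le_nhds)
  have hlim : Tendsto Ψ (𝓝[s] 0) (𝓝[s] 0) :=
    tendsto_nhdsWithin_iff.2 ⟨hΨ.trans_tendsto hnorm_rpow, eventually_mem_nhdsWithin.mono hmaps⟩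
  have hpow : (fun z : ℂ => (‖z‖ ^ α) ^ k) =O[𝓝[s] 0] fun z => z ^ n := by
    refine IsBigO.of_bound 1 (eventually_nhdsWithin_of_eventually_nhds ?_)
    filter_upwards [Metric.ball_mem_nhds (0 : ℂ) one_pos] with z hz
    rw [mem_ball_zero_iff] at hz
    rw [one_mul, norm_pow, norm_pow, Real.norm_of_nonneg (by positivity),
      ← Real.rpow_natCast, ← Real.rpow_mul (norm_nonneg z), ← Real.rpow_natCast]
    exact Real.rpow_le_rpow_of_exponent_ge' (norm_nonneg z) hz.le (Nat.cast_nonneg n) hk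
  calc (fun z => F (Ψ z)) =O[𝓝[s] 0] fun z => Ψ z ^ k := (hF k).comp_tendsto hlim
    _ =O[𝓝[s] 0] fun z => (‖z‖ ^ α) ^ k := hΨ.pow k
    _ =O[𝓝[s] 0] fun z => z ^ n := hpow

theorem cone_condition_on_subdomain_implies_vanishing_general
    (F : ℂ → ℂ)
    (hF_hol : DifferentiableOn ℂ F upperHalfDisc)
    (hvanish : ∀ k : ℕ, ∃ Ck > (0 : ℝ), ∃ δ > (0 : ℝ),
      ∀ z ∈ upperHalfDisc, ‖z‖ < δ →
        ‖F z‖ ≤ Ck * ‖z‖ ^ k)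
    (K : ℝ)
    (Bhat : Set ℂ) (hB_sub : Bhat ⊆ upperHalfDisc) (hB_open : IsOpen Bhat)
    (α : ℝ) (hα : 0 < α)
    (Ψ : ℂ → ℂ)
    -- `Ψ` is Hölder continuous of exponent `α`:
    (c : ℝ)
    (hΨ_holder : ∀ x ∈ closure upperHalfDisc, ∀ y ∈ closure upperHalfDisc,
      dist (Ψ x) (Ψ y) ≤ c * dist x y ^ α)
    -- `Ψ` restricts to a biholomorphism of `Δ⁺` onto `B̂`:
    (hΨ_hol : DifferentiableOn ℂ Ψ upperHalfDisc)
    (hΨ_bij' : Set.BijOn Ψ upperHalfDisc Bhat)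
    (hΨ_zero : Ψ 0 = 0)
    -- the cone condition on `B̂`:
    (hconeB : ∀ p ∈ Bhat, |(F p).im| ≤ K * |(F p).re|) :
    ∀ z ∈ upperHalfDisc, F z = 0 := by
  have hmaps : MapsTo Ψ upperHalfDisc upperHalfDisc := fun z hz => hB_sub (hΨ_bij'.mapsTo hz)
  have hF_bigO (k : ℕ) : F =O[𝓝[upperHalfDisc] 0] fun w => w ^ k := by
    obtain ⟨Ck, -, δ, hδ, hF⟩ := hvanish k
    refine IsBigO.of_bound Ck (eventually_nhdsWithin_iff.2 ?_)
    filter_upwards [Metric.ball_mem_nhds (0 : ℂ) hδ] with z hz hzU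
    simpa using hF z hzU (mem_ball_zero_iff.1 hz)
  have hΨ_bigO : Ψ =O[𝓝[upperHalfDisc] 0] fun z => ‖z‖ ^ α := by
    refine IsBigO.of_bound c (eventually_nhdsWithin_of_forall fun z hz => ?_)
    simpa [hΨ_zero, abs_of_nonneg (Real.rpow_nonneg (norm_nonneg z) α)] using
      hΨ_holder z (subset_closure hz) 0 zero_mem_closure_upperHalfDisc
  have hFΨ : ∀ z ∈ upperHalfDisc, F (Ψ z) = 0 :=
    eqOn_zero_of_isBigO_sq_of_mapsTo_realAxisCone (hF_hol.comp hΨ_hol hmaps)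
      (fun z hz => hconeB _ (hΨ_bij'.mapsTo hz))
      (isBigO_comp_pow_of_forall_isBigO_pow hα hF_bigO hΨ_bigO hmaps 2)
  have hp : Ψ (I / 2) ∈ Bhat := hΨ_bij'.mapsTo (I_div_mem_upperHalfDisc (by norm_num))
  have hF_nhds : F =ᶠ[𝓝 (Ψ (I / 2))] 0 := by
    filter_upwards [hB_open.mem_nhds hp] with q hq
    obtain ⟨w, hw, rfl⟩ := hΨ_bij'.surjOn hq
    exact hFΨ w hw
  exact fun z hz => (hF_hol.analyticOnNhd isOpen_upperHalfDisc)
    |>.eqOn_zero_of_preconnected_of_eventuallyEq_zero isPreconnected_upperHalfDisc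
      (hB_sub hp) hF_nhds hz

/-- **Lemma 2.4.**  If `F` is holomorphic on `Δ⁺`, continuous on `Δ⁺ ∪ γ`, maps `γ` into a cone
`{|Im z| ≤ C|Re z|}`, vanishes to infinite order at `0`, and moreover there are a constant
`K > 0` and an open simply connected `B̂ ⊆ Δ⁺` with `0 ∈ ∂B̂`, together with an `α`-Hölder
homeomorphism `Ψ` of `closure Δ⁺` onto `closure B̂` restricting to a biholomorphism
`Δ⁺ → B̂` with `Ψ(0) = 0`, such that `|Im F| ≤ K |Re F|` on `B̂`, then `F ≡ 0` on `Δ⁺`. -/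
theorem cone_condition_on_subdomain_implies_vanishing
    (F : ℂ → ℂ)
    (hF_hol : DifferentiableOn ℂ F upperHalfDisc)
    (hF_cont : ContinuousOn F (upperHalfDisc ∪ realSegment))
    (C : ℝ) (hC : 0 < C)
    (hcone : ∀ t ∈ realSegment, |(F t).im| ≤ C * |(F t).re|)
    (hvanish : ∀ k : ℕ, ∃ Ck > (0 : ℝ), ∃ δ > (0 : ℝ),
      ∀ z ∈ upperHalfDisc, ‖z‖ < δ →
        ‖F z‖ ≤ Ck * ‖z‖ ^ k)
    (K : ℝ) (hK : 0 < K)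
    (Bhat : Set ℂ) (hB_sub : Bhat ⊆ upperHalfDisc) (hB_open : IsOpen Bhat)
    (hB_sc : SimplyConnectedSpace Bhat)
    (hB_bd : (0 : ℂ) ∈ frontier Bhat)
    (α : ℝ) (hα : 0 < α)
    (Ψ : ℂ → ℂ)
    -- `Ψ` is a homeomorphism of `closure Δ⁺` onto `closure B̂`:
    (hΨ_bij : Set.BijOn Ψ (closure upperHalfDisc) (closure Bhat))
    (hΨ_inv_cont : ContinuousOn (Function.invFunOn Ψ (closure upperHalfDisc))
      (closure Bhat))
    -- `Ψ` is Hölder continuous of exponent `α`: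
    (c : ℝ) (hc : 0 < c)
    (hΨ_holder : ∀ x ∈ closure upperHalfDisc, ∀ y ∈ closure upperHalfDisc,
      dist (Ψ x) (Ψ y) ≤ c * dist x y ^ α)
    -- `Ψ` restricts to a biholomorphism of `Δ⁺` onto `B̂`:
    (hΨ_hol : DifferentiableOn ℂ Ψ upperHalfDisc)
    (hΨ_bij' : Set.BijOn Ψ upperHalfDisc Bhat)
    (hΨ_zero : Ψ 0 = 0)
    -- the cone condition on `B̂`:
    (hconeB : ∀ p ∈ Bhat, |(F p).im| ≤ K * |(F p).re|) :
    ∀ z ∈ upperHalfDisc, F z = 0 :=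
  cone_condition_on_subdomain_implies_vanishing_general F hF_hol hvanish K Bhat hB_sub hB_open α hα
    Ψ c hΨ_holder hΨ_hol hΨ_bij' hΨ_zero hconeB
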